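/- arXiv:1305.4256 — 2 statements merged into one kernel-verified Lean document; each statement's English description precedes it below -/
import Mathlib

section
/- Let ε > 0 and let A : ℝ → ℝ be a convex function such that A(x) = x for all x ≥ 0 and A(x) = -x - ε for all x ≤ -ε. Define M(x,y) = (x+y)/2 + A((x-y)/2). Then for all x, y ∈ ℝ one has 0 ≤ max(x,y) - M(x,y) ≤ ε. -/
/-!
Since `max x y = (x + y) / 2 + |x - y| / 2`, the claim is `0 ≤ |t| - A t ≤ ε` at `t = (x - y) / 2`.
A convex function lies above every affine function it agrees with on a half-line, so
`A t ≥ max t (-t - ε) ≥ |t| - ε`. On the gap `[-ε, 0]`, convexity bounds `A` by its endpoint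
values `A (-ε) = A 0 = 0`, and outside the gap `A t ≤ |t|` is read off directly.
-/

open Set

variable {𝕜 : Type*} [Field 𝕜] [LinearOrder 𝕜] [IsStrictOrderedRing 𝕜] {f : 𝕜 → 𝕜}

theorem ConvexOn.affine_le_of_eq_on_Ici (hf : ConvexOn 𝕜 univ f) {a b c : 𝕜}
    (h : ∀ x, c ≤ x → f x = a * x + b) (x : 𝕜) : a * x + b ≤ f x := by
  rcases le_or_gt c x with hcx | hxc
  · exact (h x hcx).ge
  have hslope := hf.slope_mono_adjacent (mem_univ x) (mem_univ (c + 1)) hxc (lt_add_one c)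
  rw [h c le_rfl, h (c + 1) (le_add_of_nonneg_right zero_le_one), add_sub_cancel_left, div_one,
    div_le_iff₀ (sub_pos.2 hxc)] at hslope
  linarith

theorem ConvexOn.affine_le_of_eq_on_Iic (hf : ConvexOn 𝕜 univ f) {a b c : 𝕜}
    (h : ∀ x, x ≤ c → f x = a * x + b) (x : 𝕜) : a * x + b ≤ f x := by
  rcases le_or_gt x c with hxc | hcx
  · exact (h x hxc).ge
  have hslope := hf.slope_mono_adjacent (mem_univ (c - 1)) (mem_univ x) (sub_one_lt c) hcx
  rw [h c le_rfl, h (c - 1) (sub_le_self c zero_le_one), sub_sub_cancel, div_one,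
    le_div_iff₀ (sub_pos.2 hcx)] at hslope
  linarith

theorem max_eq_add_half_add_abs_sub_half {α : Type*} [Field α] [LinearOrder α]
    [IsStrictOrderedRing α] (x y : α) : max x y = (x + y) / 2 + |x - y| / 2 := by
  linarith [min_add_max x y, max_sub_min_eq_abs' x y]

section SmoothedAbs

variable {ε : ℝ} {A : ℝ → ℝ}

theorem abs_sub_le_of_convexOn (hε : 0 ≤ ε) (hA : ConvexOn ℝ univ A) (hA1 : ∀ x : ℝ, 0 ≤ x → A x = x)
    (hA2 : ∀ x : ℝ, x ≤ -ε → A x = -x - ε) (t : ℝ) : |t| - ε ≤ A t := by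
  have hright : 1 * t + 0 ≤ A t :=
    hA.affine_le_of_eq_on_Ici (fun x hx => by rw [hA1 x hx]; ring) t
  have hleft : -1 * t + -ε ≤ A t :=
    hA.affine_le_of_eq_on_Iic (fun x hx => by rw [hA2 x hx]; ring) t
  rcases abs_cases t with ⟨ht, -⟩ | ⟨ht, -⟩ <;> linarith

theorem le_abs_of_convexOn (hε : 0 ≤ ε) (hA : ConvexOn ℝ univ A)
    (hA1 : ∀ x : ℝ, 0 ≤ x → A x = x) (hA2 : ∀ x : ℝ, x ≤ -ε → A x = -x - ε) (t : ℝ) :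
    A t ≤ |t| := by
  rcases le_or_gt 0 t with ht0 | ht0
  · rw [hA1 t ht0, abs_of_nonneg ht0]
  rcases le_or_gt t (-ε) with htε | htε
  · rw [hA2 t htε, abs_of_neg ht0]
    linarith
  have hgap : A t ≤ max (A (-ε)) (A 0) :=
    hA.le_on_segment (mem_univ _) (mem_univ _)
      (by rw [segment_eq_Icc (by linarith)]; exact ⟨htε.le, ht0.le⟩)
  rw [hA2 (-ε) le_rfl, hA1 0 le_rfl, neg_neg, sub_self, max_self] at hgap
  linarith [abs_nonneg t]

end SmoothedAbs

theorem stmt_3 (ε : ℝ) (hε : 0 < ε) (A : ℝ → ℝ)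
    (hA : ConvexOn ℝ Set.univ A)
    (hA1 : ∀ x : ℝ, 0 ≤ x → A x = x)
    (hA2 : ∀ x : ℝ, x ≤ -ε → A x = -x - ε)
    (M : ℝ → ℝ → ℝ) (hM : ∀ x y, M x y = (x + y) / 2 + A ((x - y) / 2)) :
    ∀ x y : ℝ, 0 ≤ max x y - M x y ∧ max x y - M x y ≤ ε := by
  intro x y
  have hmax : max x y = (x + y) / 2 + |(x - y) / 2| := by
    rw [max_eq_add_half_add_abs_sub_half, abs_div, abs_two]
  have hupper := le_abs_of_convexOn hε.le hA hA1 hA2 ((x - y) / 2)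
  have hlower := abs_sub_le_of_convexOn hε.le hA hA1 hA2 ((x - y) / 2)
  rw [hM, hmax]
  constructor <;> linarith
end

section
/- Let E be a real vector space, let A : ℝ → ℝ be convex and 1-Lipschitz, and define M(x,y) = (x+y)/2 + A((x-y)/2). If Φ, Ψ : E → ℝ are convex functions, then the function z ↦ M(Φ(z), Ψ(z)) is convex on E. -/
theorem stmt_9 (E : Type*) [AddCommGroup E] [Module ℝ E]
    (A : ℝ → ℝ) (hA : ConvexOn ℝ Set.univ A)
    (hLip : ∀ s t : ℝ, |A s - A t| ≤ |s - t|)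
    (M : ℝ → ℝ → ℝ) (hM : ∀ x y, M x y = (x + y) / 2 + A ((x - y) / 2))
    (Φ Ψ : E → ℝ) (hΦ : ConvexOn ℝ Set.univ Φ) (hΨ : ConvexOn ℝ Set.univ Ψ) :
    ConvexOn ℝ Set.univ (fun z : E => M (Φ z) (Ψ z)) := by
  have hmono : ∀ x x' y y' : ℝ, x ≤ x' → y ≤ y' → M x y ≤ M x' y' := by
    intro x x' y y' hx hy
    have h1 := abs_le.mp (hLip ((x - y) / 2) ((x' - y) / 2))
    have h2 := abs_le.mp (hLip ((x' - y) / 2) ((x' - y') / 2))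
    have e1 : |(x - y) / 2 - (x' - y) / 2| = (x' - x) / 2 := by
      rw [abs_of_nonpos (by linarith)]; ring
    have e2 : |(x' - y) / 2 - (x' - y') / 2| = (y' - y) / 2 := by
      rw [abs_of_nonneg (by linarith)]; ring
    rw [e1] at h1; rw [e2] at h2
    rw [hM, hM]
    linarith
  refine ⟨convex_univ, ?_⟩
  intro z _ w _ a b ha hb hab
  simp only [smul_eq_mul]
  have hu : Φ (a • z + b • w) ≤ a * Φ z + b * Φ w := by
    have := hΦ.2 (Set.mem_univ z) (Set.mem_univ w) ha hb hab
    simpa using this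
  have hv : Ψ (a • z + b • w) ≤ a * Ψ z + b * Ψ w := by
    have := hΨ.2 (Set.mem_univ z) (Set.mem_univ w) ha hb hab
    simpa using this
  have step1 : M (Φ (a • z + b • w)) (Ψ (a • z + b • w)) ≤
      M (a * Φ z + b * Φ w) (a * Ψ z + b * Ψ w) := hmono _ _ _ _ hu hv
  have step2 : M (a * Φ z + b * Φ w) (a * Ψ z + b * Ψ w) ≤
      a * M (Φ z) (Ψ z) + b * M (Φ w) (Ψ w) := by
    rw [hM, hM, hM]
    have hAconv := hA.2 (Set.mem_univ ((Φ z - Ψ z) / 2)) (Set.mem_univ ((Φ w - Ψ w) / 2)) ha hb hab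
    simp only [smul_eq_mul] at hAconv
    have heq : (a * Φ z + b * Φ w - (a * Ψ z + b * Ψ w)) / 2
        = a * ((Φ z - Ψ z) / 2) + b * ((Φ w - Ψ w) / 2) := by ring
    rw [heq]
    linarith
  linarith
end
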